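/- Let a, b, d, e ∈ ℂ be such that neither d nor e is a non-positive integer, Re(d + e − a − b − 2) > 0, and (a−1)(b−1) = (d−2)(e−2). Then ₃F₂(a, b, 2; d, e; 1) = (d−1)(e−1)/(d + e − a − b − 2). -/

import Mathlib

/-!
Write `r k = (a)_k (b)_k / ((d)_k (e)_k)`. Since `(2)_k = (k + 1)!`, the `k`-th term of the series
is `r k * (k + 1)`. The recurrence `r (k + 1) (d + k) (e + k) = r k (a + k) (b + k)` together with
`(a - 1)(b - 1) = (d - 2)(e - 2)` makes the series telescope:
`r k (k + 1) (d + e - a - b - 2) = v k - v (k + 1)` with `v k = r k (d + k - 1)(e + k - 1)`.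
Gauss's product formula for `Γ` (`Complex.GammaSeq`) gives `r (n + 1) = O(n ^ Re(a + b - d - e))`,
so the series converges absolutely and `v n → 0`; the sum is therefore
`v 0 / (d + e - a - b - 2) = (d - 1)(e - 1) / (d + e - a - b - 2)`.
-/

noncomputable def poch (a : ℂ) (k : ℕ) : ℂ := Polynomial.eval a (ascPochhammer ℂ k)

noncomputable def F32 (a b c d e : ℂ) : ℂ :=
  ∑' k : ℕ, (poch a k * poch b k * poch c k) / (poch d k * poch e k * (k.factorial : ℂ))

open Filter Asymptotics Topology
open scoped Nat

@[simp]
lemma poch_zero (a : ℂ) : poch a 0 = 1 := by simp [poch]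

lemma poch_succ (a : ℂ) (k : ℕ) : poch a (k + 1) = poch a k * (a + k) :=
  ascPochhammer_succ_eval k a

lemma poch_ne_zero {a : ℂ} (ha : ∀ m : ℕ, a ≠ -(m : ℂ)) (k : ℕ) : poch a k ≠ 0 := by
  simpa [poch] using fun m _ hm => ha m (by rw [hm, neg_neg])

lemma poch_eq_zero_of_lt {a : ℂ} {m k : ℕ} (ha : a = -(m : ℂ)) (hk : m < k) : poch a k = 0 := by
  simpa [poch] using ⟨m, hk, by rw [ha, neg_neg]⟩

lemma poch_two (k : ℕ) : poch 2 k = (k + 1)! := by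
  simpa [poch, one_add_one_eq_two, add_comm] using factorial_mul_ascPochhammer ℂ 1 k

lemma poch_succ_mul_GammaSeq {a : ℂ} (ha : ∀ m : ℕ, a ≠ -(m : ℂ)) (n : ℕ) :
    poch a (n + 1) * Complex.GammaSeq a n = (n : ℂ) ^ a * n ! := by
  have hprod : ∏ j ∈ Finset.range (n + 1), (a + j) = poch a (n + 1) := by
    induction n with
    | zero => simp [poch_succ]
    | succ n ih => rw [Finset.prod_range_succ, ih, ← poch_succ]
  rw [Complex.GammaSeq, hprod, mul_div_cancel₀ _ (poch_ne_zero ha _)]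

lemma natCast_rpow_mul_factorial_pos {n : ℕ} (hn : 0 < n) (x : ℝ) : 0 < (n : ℝ) ^ x * n ! :=
  mul_pos (Real.rpow_pos_of_pos (by exact_mod_cast hn) x) (by positivity)

lemma norm_natCast_cpow_mul_factorial {n : ℕ} (hn : 0 < n) (a : ℂ) :
    ‖(n : ℂ) ^ a * (n ! : ℂ)‖ = ‖(n : ℝ) ^ a.re * (n ! : ℝ)‖ := by
  rw [norm_mul, Complex.norm_natCast_cpow_of_pos hn, Complex.norm_natCast,
    Real.norm_of_nonneg (natCast_rpow_mul_factorial_pos hn _).le]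

lemma natCast_cpow_mul_factorial_ne_zero {n : ℕ} (hn : 0 < n) (a : ℂ) :
    (n : ℂ) ^ a * (n ! : ℂ) ≠ 0 := by
  rw [← norm_ne_zero_iff, norm_natCast_cpow_mul_factorial hn, norm_ne_zero_iff]
  exact (natCast_rpow_mul_factorial_pos hn _).ne'

lemma poch_succ_isBigO (a : ℂ) :
    (fun n : ℕ => poch a (n + 1)) =O[atTop] fun n => (n : ℝ) ^ a.re * n ! := by
  by_cases ha : ∃ m : ℕ, a = -(m : ℂ)
  · obtain ⟨m, hm⟩ := ha
    refine (isBigO_zero _ _).congr' ?_ EventuallyEq.rfl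
    filter_upwards [eventually_ge_atTop m] with n hn
    exact (poch_eq_zero_of_lt hm (by omega)).symm
  push Not at ha
  have hinv : (fun n => (Complex.GammaSeq a n)⁻¹) =O[atTop] fun _ => (1 : ℝ) :=
    ((Complex.GammaSeq_tendsto_Gamma a).inv₀ (Complex.Gamma_ne_zero ha)).isBigO_one ℝ
  have hpow : (fun n : ℕ => (n : ℂ) ^ a * n !) =O[atTop] fun n => (n : ℝ) ^ a.re * n ! :=
    IsBigO.of_bound' <| (eventually_gt_atTop 0).mono fun n hn =>
      (norm_natCast_cpow_mul_factorial hn a).le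
  refine (hpow.mul hinv).congr' ?_ (by simp)
  filter_upwards [eventually_gt_atTop 0] with n hn
  have hne := natCast_cpow_mul_factorial_ne_zero hn a
  rw [← poch_succ_mul_GammaSeq ha] at hne ⊢
  rw [mul_inv_cancel_right₀ (right_ne_zero_of_mul hne)]

lemma inv_poch_succ_isBigO {d : ℂ} (hd : ∀ m : ℕ, d ≠ -(m : ℂ)) :
    (fun n : ℕ => (poch d (n + 1))⁻¹) =O[atTop] fun n => ((n : ℝ) ^ d.re * n !)⁻¹ := by
  have hG : (fun n => Complex.GammaSeq d n) =O[atTop] fun _ => (1 : ℂ) :=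
    (Complex.GammaSeq_tendsto_Gamma d).isBigO_one ℂ
  have hpow : (fun n : ℕ => (n : ℝ) ^ d.re * n !) =O[atTop]
      fun n => poch d (n + 1) * Complex.GammaSeq d n :=
    IsBigO.of_bound' <| (eventually_gt_atTop 0).mono fun n hn => by
      rw [poch_succ_mul_GammaSeq hd, norm_natCast_cpow_mul_factorial hn]
  have hpoch : (fun n => poch d (n + 1) * Complex.GammaSeq d n) =O[atTop]
      fun n => poch d (n + 1) := by
    simpa using (isBigO_refl (fun n => poch d (n + 1)) atTop).mul hG
  refine (hpow.trans hpoch).inv_rev ?_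
  filter_upwards [eventually_gt_atTop 0] with n hn h0
  exact absurd h0 (natCast_rpow_mul_factorial_pos hn _).ne'

lemma natCast_add_isBigO (c : ℂ) : (fun n : ℕ => (n : ℂ) + c) =O[atTop] fun n => (n : ℝ) :=
  (isBigO_of_le _ fun n => by simp).add
    ((isLittleO_const_id_atTop c).comp_tendsto tendsto_natCast_atTop_atTop).isBigO

noncomputable def pochRatio (a b d e : ℂ) (k : ℕ) : ℂ :=
  poch a k * poch b k / (poch d k * poch e k)

@[simp]
lemma pochRatio_zero (a b d e : ℂ) : pochRatio a b d e 0 = 1 := by simp [pochRatio]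

lemma pochRatio_succ_mul (a b : ℂ) {d e : ℂ} (hd : ∀ m : ℕ, d ≠ -(m : ℂ))
    (he : ∀ m : ℕ, e ≠ -(m : ℂ)) (k : ℕ) :
    pochRatio a b d e (k + 1) * ((d + k) * (e + k)) =
      pochRatio a b d e k * ((a + k) * (b + k)) := by
  have hdk : d + k ≠ 0 := fun h => hd k (eq_neg_of_add_eq_zero_left h)
  have hek : e + k ≠ 0 := fun h => he k (eq_neg_of_add_eq_zero_left h)
  simp only [pochRatio, poch_succ]
  field_simp [poch_ne_zero hd k, poch_ne_zero he k]

lemma pochRatio_succ_isBigO (a b : ℂ) {d e : ℂ} (hd : ∀ m : ℕ, d ≠ -(m : ℂ))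
    (he : ∀ m : ℕ, e ≠ -(m : ℂ)) :
    (fun n => pochRatio a b d e (n + 1)) =O[atTop] fun n => (n : ℝ) ^ (a + b - d - e).re := by
  refine (((poch_succ_isBigO a).mul (poch_succ_isBigO b)).mul
    ((inv_poch_succ_isBigO hd).mul (inv_poch_succ_isBigO he))).congr'
    (.of_eq (by ext n; rw [pochRatio]; ring)) ?_
  filter_upwards [eventually_gt_atTop 0] with n hn
  have hn' : (0 : ℝ) < n := by exact_mod_cast hn
  simp only [Complex.sub_re, Complex.add_re, Real.rpow_sub hn', Real.rpow_add hn']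
  field_simp

lemma summable_pochRatio_mul_succ (a b : ℂ) {d e : ℂ} (hd : ∀ m : ℕ, d ≠ -(m : ℂ))
    (he : ∀ m : ℕ, e ≠ -(m : ℂ)) (hconv : 0 < (d + e - a - b - 2).re) :
    Summable fun k : ℕ => pochRatio a b d e k * (k + 1) := by
  rw [← summable_nat_add_iff 1]
  have hx : (a + b - d - e).re + 1 < -1 := by
    simp only [Complex.sub_re, Complex.add_re] at hconv ⊢
    norm_num at hconv
    linarith
  refine summable_of_isBigO_nat (Real.summable_nat_rpow.2 hx) ?_
  refine ((pochRatio_succ_isBigO a b hd he).mul (natCast_add_isBigO 2)).congr'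
    (.of_eq (by ext n; push_cast; ring)) ?_
  filter_upwards [eventually_gt_atTop 0] with n hn
  rw [Real.rpow_add_one (by positivity)]

lemma tendsto_pochRatio_mul_zero (a b : ℂ) {d e : ℂ} (hd : ∀ m : ℕ, d ≠ -(m : ℂ))
    (he : ∀ m : ℕ, e ≠ -(m : ℂ)) (hconv : 0 < (d + e - a - b - 2).re) :
    Tendsto (fun k : ℕ => pochRatio a b d e k * ((d + k - 1) * (e + k - 1))) atTop (𝓝 0) := by
  rw [← tendsto_add_atTop_iff_nat 1]
  have hx : (a + b - d - e).re + 2 = -(d + e - a - b - 2).re := by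
    simp only [Complex.sub_re, Complex.add_re]
    norm_num
    ring
  refine IsBigO.trans_tendsto (g'' := fun n : ℕ => (n : ℝ) ^ (-(d + e - a - b - 2).re)) ?_
    ((tendsto_rpow_neg_atTop hconv).comp tendsto_natCast_atTop_atTop)
  refine ((pochRatio_succ_isBigO a b hd he).mul
    ((natCast_add_isBigO d).mul (natCast_add_isBigO e))).congr'
    (.of_eq (by ext n; push_cast; ring)) ?_
  filter_upwards [eventually_gt_atTop 0] with n hn
  rw [← hx, Real.rpow_add (by positivity)]
  simp [sq]

lemma pochRatio_mul_succ_mul_eq_sub {a b d e : ℂ} (hd : ∀ m : ℕ, d ≠ -(m : ℂ))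
    (he : ∀ m : ℕ, e ≠ -(m : ℂ)) (hquad : (a - 1) * (b - 1) = (d - 2) * (e - 2)) (k : ℕ) :
    pochRatio a b d e k * (k + 1) * (d + e - a - b - 2) =
      pochRatio a b d e k * ((d + k - 1) * (e + k - 1)) -
        pochRatio a b d e (k + 1) * ((d + (k + 1 : ℕ) - 1) * (e + (k + 1 : ℕ) - 1)) := by
  push_cast
  linear_combination pochRatio_succ_mul a b hd he k + pochRatio a b d e k * hquad

lemma hasSum_of_telescope {G : Type*} [AddCommGroup G] [TopologicalSpace G]
    [IsTopologicalAddGroup G] [T2Space G] {f v : ℕ → G} (hf : Summable f)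
    (hfv : ∀ k, f k = v k - v (k + 1)) (hv : Tendsto v atTop (𝓝 0)) : HasSum f (v 0) := by
  refine hf.hasSum_iff_tendsto_nat.2 ?_
  simp only [hfv, Finset.sum_range_sub']
  simpa using tendsto_const_nhds.sub hv

lemma F32_two_eq_tsum (a b d e : ℂ) :
    F32 a b 2 d e = ∑' k : ℕ, pochRatio a b d e k * (k + 1) := by
  refine tsum_congr fun k => ?_
  have hk : (k ! : ℂ) ≠ 0 := by exact_mod_cast k.factorial_ne_zero
  rw [poch_two, pochRatio, div_mul_eq_mul_div, ← mul_div_mul_right _ (poch d k * poch e k) hk,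
    Nat.factorial_succ]
  push_cast
  ring

/-- Theorem thm:newguys, part 3. -/
theorem slater_orbit_formula_three
    (a b d e : ℂ)
    (hd : ∀ m : ℕ, d ≠ -(m : ℂ))
    (he : ∀ m : ℕ, e ≠ -(m : ℂ))
    (hconv : 0 < (d + e - a - b - 2).re)
    (hquad : (a - 1) * (b - 1) = (d - 2) * (e - 2)) :
    F32 a b 2 d e = (d - 1) * (e - 1) / (d + e - a - b - 2) := by
  have hs : d + e - a - b - 2 ≠ 0 := fun h => by simp [h] at hconv
  have hsum := hasSum_of_telescope
    ((summable_pochRatio_mul_succ a b hd he hconv).mul_right (d + e - a - b - 2))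
    (pochRatio_mul_succ_mul_eq_sub hd he hquad) (tendsto_pochRatio_mul_zero a b hd he hconv)
  simp only [pochRatio_zero, Nat.cast_zero, add_zero, one_mul] at hsum
  rw [F32_two_eq_tsum, eq_div_iff hs, ← tsum_mul_right, hsum.tsum_eq]
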